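/- Forward slicing is a total deterministic function on prefixes: if e ⇒ v and e' ⊑ e, then there exists a unique partial value v' such that e' ↗ v', and moreover v' ⊑ v. -/
import Mathlib


/-- Partial expressions of the simple language, with holes. -/
inductive Expr where
  | hole : Expr
  | num : ℕ → Expr
  | add : Expr → Expr → Expr
  | pair : Expr → Expr → Expr
  | fst : Expr → Expr
  | snd : Expr → Expr
deriving DecidableEq

/-- The prefix relation ⊑ on partial expressions. -/
inductive Sq : Expr → Expr → Prop where
  | hole : ∀ e, Sq Expr.hole e
  | num : ∀ n, Sq (Expr.num n) (Expr.num n)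
  | add : ∀ {a a' b b'}, Sq a a' → Sq b b' → Sq (Expr.add a b) (Expr.add a' b')
  | pair : ∀ {a a' b b'}, Sq a a' → Sq b b' → Sq (Expr.pair a b) (Expr.pair a' b')
  | fst : ∀ {a a'}, Sq a a' → Sq (Expr.fst a) (Expr.fst a')
  | snd : ∀ {a a'}, Sq a a' → Sq (Expr.snd a) (Expr.snd a')

/-- Partial values, with holes. -/
inductive Val where
  | hole : Val
  | num : ℕ → Val
  | pair : Val → Val → Val
deriving DecidableEq

/-- The prefix relation ⊑ on partial values. -/
inductive VSq : Val → Val → Prop where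
  | hole : ∀ v, VSq Val.hole v
  | num : ∀ n, VSq (Val.num n) (Val.num n)
  | pair : ∀ {a a' b b'}, VSq a a' → VSq b b' → VSq (Val.pair a b) (Val.pair a' b')

/-- Big-step evaluation. -/
inductive Eval : Expr → Val → Prop where
  | num : ∀ n, Eval (Expr.num n) (Val.num n)
  | add : ∀ {a b n m}, Eval a (Val.num n) → Eval b (Val.num m) →
      Eval (Expr.add a b) (Val.num (n + m))
  | pair : ∀ {a b va vb}, Eval a va → Eval b vb →
      Eval (Expr.pair a b) (Val.pair va vb)
  | fst : ∀ {a v₁ v₂}, Eval a (Val.pair v₁ v₂) → Eval (Expr.fst a) v₁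
  | snd : ∀ {a v₁ v₂}, Eval a (Val.pair v₁ v₂) → Eval (Expr.snd a) v₂

/-- Forward slicing: evaluation extended with hole propagation. -/
inductive Fwd : Expr → Val → Prop where
  | hole : Fwd Expr.hole Val.hole
  | num : ∀ n, Fwd (Expr.num n) (Val.num n)
  | add : ∀ {a b n m}, Fwd a (Val.num n) → Fwd b (Val.num m) →
      Fwd (Expr.add a b) (Val.num (n + m))
  | addHoleL : ∀ {a b}, Fwd a Val.hole → Fwd (Expr.add a b) Val.hole
  | addHoleR : ∀ {a b v}, Fwd a v → Fwd b Val.hole → Fwd (Expr.add a b) Val.hole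
  | pair : ∀ {a b va vb}, Fwd a va → Fwd b vb →
      Fwd (Expr.pair a b) (Val.pair va vb)
  | fst : ∀ {a v₁ v₂}, Fwd a (Val.pair v₁ v₂) → Fwd (Expr.fst a) v₁
  | fstHole : ∀ {a}, Fwd a Val.hole → Fwd (Expr.fst a) Val.hole
  | snd : ∀ {a v₁ v₂}, Fwd a (Val.pair v₁ v₂) → Fwd (Expr.snd a) v₂
  | sndHole : ∀ {a}, Fwd a Val.hole → Fwd (Expr.snd a) Val.hole


theorem fwd_det : ∀ {e v v'}, Fwd e v → Fwd e v' → v = v' := by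
  intro e v v' h
  induction h generalizing v' with
  | hole => intro h'; cases h'; rfl
  | num n => intro h'; cases h'; rfl
  | add ha hb iha ihb =>
    intro h'; cases h' with
    | add ha' hb' => cases iha ha'; cases ihb hb'; rfl
    | addHoleL ha' => exact absurd (iha ha') (by simp)
    | addHoleR ha' hb' => exact absurd (ihb hb') (by simp)
  | addHoleL ha iha =>
    intro h'; cases h' with
    | add ha' _ => cases iha ha'
    | addHoleL _ => rfl
    | addHoleR _ _ => rfl
  | addHoleR ha hb iha ihb =>
    intro h'; cases h' with
    | add _ hb' => cases ihb hb'
    | addHoleL _ => rfl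
    | addHoleR _ _ => rfl
  | pair ha hb iha ihb =>
    intro h'; cases h' with
    | pair ha' hb' => rw [iha ha', ihb hb']
  | fst ha iha =>
    intro h'; cases h' with
    | fst ha' => cases iha ha'; rfl
    | fstHole ha' => cases iha ha'
  | fstHole ha iha =>
    intro h'; cases h' with
    | fst ha' => cases iha ha'
    | fstHole _ => rfl
  | snd ha iha =>
    intro h'; cases h' with
    | snd ha' => cases iha ha'; rfl
    | sndHole ha' => cases iha ha'
  | sndHole ha iha =>
    intro h'; cases h' with
    | snd ha' => cases iha ha'
    | sndHole _ => rfl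

theorem fwd_exists : ∀ {e v e'}, Eval e v → Sq e' e → ∃ v', Fwd e' v' ∧ VSq v' v := by
  intro e v e' h
  induction h generalizing e' with
  | num n =>
    intro hs; cases hs with
    | hole => exact ⟨Val.hole, Fwd.hole, VSq.hole _⟩
    | num => exact ⟨_, Fwd.num n, VSq.num n⟩
  | add ha hb iha ihb =>
    intro hs; cases hs with
    | hole => exact ⟨Val.hole, Fwd.hole, VSq.hole _⟩
    | add hsa hsb =>
      obtain ⟨va, fa, sa⟩ := iha hsa
      obtain ⟨vb, fb, sb⟩ := ihb hsb
      cases sa with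
      | hole => exact ⟨Val.hole, Fwd.addHoleL fa, VSq.hole _⟩
      | num =>
        cases sb with
        | hole => exact ⟨Val.hole, Fwd.addHoleR fa fb, VSq.hole _⟩
        | num => exact ⟨_, Fwd.add fa fb, VSq.num _⟩
  | pair ha hb iha ihb =>
    intro hs; cases hs with
    | hole => exact ⟨Val.hole, Fwd.hole, VSq.hole _⟩
    | pair hsa hsb =>
      obtain ⟨va, fa, sa⟩ := iha hsa
      obtain ⟨vb, fb, sb⟩ := ihb hsb
      exact ⟨_, Fwd.pair fa fb, VSq.pair sa sb⟩
  | fst ha iha =>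
    intro hs; cases hs with
    | hole => exact ⟨Val.hole, Fwd.hole, VSq.hole _⟩
    | fst hsa =>
      obtain ⟨va, fa, sa⟩ := iha hsa
      cases sa with
      | hole => exact ⟨Val.hole, Fwd.fstHole fa, VSq.hole _⟩
      | pair s1 s2 => exact ⟨_, Fwd.fst fa, s1⟩
  | snd ha iha =>
    intro hs; cases hs with
    | hole => exact ⟨Val.hole, Fwd.hole, VSq.hole _⟩
    | snd hsa =>
      obtain ⟨va, fa, sa⟩ := iha hsa
      cases sa with
      | hole => exact ⟨Val.hole, Fwd.sndHole fa, VSq.hole _⟩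
      | pair s1 s2 => exact ⟨_, Fwd.snd fa, s2⟩

theorem fwd_total_deterministic :
    ∀ e v e', Eval e v → Sq e' e →
      ∃ v', Fwd e' v' ∧ VSq v' v ∧ ∀ v'', Fwd e' v'' → v'' = v' := by
  intro e v e' hev hs
  obtain ⟨v', fv, sv⟩ := fwd_exists hev hs
  exact ⟨v', fv, sv, fun v'' f'' => fwd_det f'' fv⟩
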